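/- arXiv:2405.12912 — 4 statements merged into one kernel-verified Lean document; each statement's English description precedes it below -/
import Mathlib

section
/- If a row-stochastic matrix P on ordered state space {0,1,...,J} has the decreasing failure rate (DFR) property (i.e., for every n, the partial sum of the first n+1 entries of row i is nonincreasing in i), then for any valid (order-preserving, consecutive-block) aggregation of states into superstates {0,...,K} with positive weights β, the aggregated matrix Q defined by q_{kk'} = (Σ_{h∈L_k} Σ_{h'∈L_{k'}} β_h p_{hh'}) / (Σ_{h∈L_k} β_h) also has the DFR property. -/
/-!
Fix `n ≤ K`. By monotonicity of `s`, the states lying in superstates `≤ n` form an initial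
segment `{0, …, m}` of `{0, …, J}`, so the `n`-th partial row sum of `Q` in superstate `k` is the
`β`-weighted average, over the block `L_k`, of the `m`-th partial row sums of `P`. For `k < k'`
every state of `L_k` precedes every state of `L_{k'}`, so by DFR of `P` each term averaged over
`L_{k'}` is at most each term averaged over `L_k`; the blocks are nonempty because `s` moves in
unit steps from `0` to `K`.
-/

open Finset

theorem Nat.exists_eq_of_apply_succ_le_add_one {s : ℕ → ℕ} {J t : ℕ}
    (hstep : ∀ i < J, s (i + 1) ≤ s i + 1) (h0 : s 0 ≤ t) (hJ : t ≤ s J) :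
    ∃ h ≤ J, s h = t := by
  induction J with
  | zero => exact ⟨0, le_rfl, le_antisymm h0 hJ⟩
  | succ J ih =>
    by_cases ht : t ≤ s J
    · obtain ⟨h, hJ', hh⟩ := ih (fun i hi => hstep i (by omega)) ht
      exact ⟨h, by omega, hh⟩
    · exact ⟨J + 1, le_rfl, by have := hstep J (by omega); omega⟩

theorem MonotoneOn.exists_filter_le_eq_range {s : ℕ → ℕ} {J n : ℕ}
    (hs : MonotoneOn s (Set.Iic J)) (h0 : s 0 ≤ n) :
    ∃ m ≤ J, (range (J + 1)).filter (fun h => s h ≤ n) = range (m + 1) := by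
  set m := Nat.findGreatest (fun h => s h ≤ n) J
  have hmJ : m ≤ J := Nat.findGreatest_le J
  have hsm : s m ≤ n := Nat.findGreatest_spec (P := fun h => s h ≤ n) (Nat.zero_le J) h0
  refine ⟨m, hmJ, ?_⟩
  ext h
  simp only [mem_filter, mem_range, Nat.lt_succ_iff]
  exact ⟨fun ⟨hJ, hh⟩ => Nat.le_findGreatest hJ hh,
    fun hhm => ⟨hhm.trans hmJ, (hs (hhm.trans hmJ : h ≤ J) hmJ hhm).trans hsm⟩⟩

theorem Finset.centerMass_le_centerMass_of_forall_le {ι : Type*} {A B : Finset ι}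
    {w f g : ι → ℝ} (hwA : ∀ a ∈ A, 0 ≤ w a) (hA : 0 < ∑ a ∈ A, w a)
    (hwB : ∀ b ∈ B, 0 ≤ w b) (hB : 0 < ∑ b ∈ B, w b)
    (hfg : ∀ a ∈ A, ∀ b ∈ B, f a ≤ g b) :
    A.centerMass w f ≤ B.centerMass w g :=
  (centerMass_le_sup hwA hA).trans <|
    (sup'_le _ _ fun a ha => le_inf' _ _ fun b hb => hfg a ha b hb).trans
      (inf_le_centerMass hwB hB)

noncomputable def aggregate (J : ℕ) (P : ℕ → ℕ → ℝ) (β : ℕ → ℝ) (s : ℕ → ℕ) (k k' : ℕ) : ℝ :=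
  (∑ h ∈ (range (J + 1)).filter (fun h => s h = k),
    ∑ h' ∈ (range (J + 1)).filter (fun h' => s h' = k'), β h * P h h') /
  (∑ h ∈ (range (J + 1)).filter (fun h => s h = k), β h)

theorem sum_range_aggregate_eq_centerMass (J n k : ℕ) (P : ℕ → ℕ → ℝ) (β : ℕ → ℝ)
    (s : ℕ → ℕ) :
    ∑ l ∈ range (n + 1), aggregate J P β s k l =
      ((range (J + 1)).filter (fun h => s h = k)).centerMass β
        (fun h => ∑ h' ∈ (range (J + 1)).filter (fun h' => s h' ≤ n), P h h') := by
  simp only [aggregate, centerMass, smul_eq_mul, div_eq_inv_mul, mul_sum]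
  rw [sum_comm]
  refine sum_congr rfl fun h _ => ?_
  rw [sum_fiberwise_eq_sum_filter]
  simp only [mem_range, Nat.lt_succ_iff]

theorem dfr_preserved_under_aggregation_general
    (J K : ℕ) (P : ℕ → ℕ → ℝ) (β : ℕ → ℝ) (s : ℕ → ℕ)
    (hDFR : ∀ n, n ≤ J → ∀ i i', i ≤ i' → i' ≤ J →
      ∑ j ∈ Finset.range (n+1), P i' j ≤ ∑ j ∈ Finset.range (n+1), P i j)
    (hβ : ∀ h, 0 < β h)
    (hmono : ∀ i i', i ≤ i' → i' ≤ J → s i ≤ s i')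
    (hstep : ∀ i, i < J → s (i+1) = s i ∨ s (i+1) = s i + 1)
    (hs0 : s 0 = 0) (hsJ : s J = K)
    (Q : ℕ → ℕ → ℝ)
    (hQ : ∀ k k', Q k k' =
      (∑ h ∈ (Finset.range (J+1)).filter (fun h => s h = k),
        ∑ h' ∈ (Finset.range (J+1)).filter (fun h' => s h' = k'), β h * P h h') /
      (∑ h ∈ (Finset.range (J+1)).filter (fun h => s h = k), β h)) :
    ∀ n, n ≤ K → ∀ k k', k ≤ k' → k' ≤ K →
      ∑ l ∈ Finset.range (n+1), Q k' l ≤ ∑ l ∈ Finset.range (n+1), Q k l := by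
  intro n hn k k' hkk' hk'K
  rcases hkk'.eq_or_lt with rfl | hlt
  · exact le_rfl
  have hs : MonotoneOn s (Set.Iic J) := fun i _ i' hi' hii' => hmono i i' hii' hi'
  obtain ⟨m, hmJ, hsegment⟩ := hs.exists_filter_le_eq_range (n := n) (by omega)
  have hblock_pos : ∀ t ≤ K, 0 < ∑ h ∈ (range (J + 1)).filter (fun h => s h = t), β h := by
    intro t ht
    obtain ⟨i, hiJ, hi⟩ := Nat.exists_eq_of_apply_succ_le_add_one (s := s)
      (fun i hi => by rcases hstep i hi with h | h <;> omega) (by omega) (hsJ ▸ ht)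
    exact sum_pos (fun h _ => hβ h) ⟨i, mem_filter.mpr ⟨by simpa using hiJ, hi⟩⟩
  have hQ_eq : Q = aggregate J P β s := funext fun k => funext (hQ k)
  simp only [hQ_eq, sum_range_aggregate_eq_centerMass, hsegment]
  refine centerMass_le_centerMass_of_forall_le (fun h _ => (hβ h).le) (hblock_pos k' hk'K)
    (fun h _ => (hβ h).le) (hblock_pos k (hkk'.trans hk'K)) fun a ha b hb => ?_
  simp only [mem_filter, mem_range] at ha hb
  exact hDFR m hmJ b a (hs.reflect_lt (by simp; omega) (by simp; omega) (by omega)).le (by omega)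

/-- DFR is preserved under valid state aggregation. -/
theorem dfr_preserved_under_aggregation
    (J K : ℕ) (P : ℕ → ℕ → ℝ) (β : ℕ → ℝ) (s : ℕ → ℕ)
    (hPnn : ∀ i j, 0 ≤ P i j)
    (hProw : ∀ i, i ≤ J → ∑ j ∈ Finset.range (J+1), P i j = 1)
    (hDFR : ∀ n, n ≤ J → ∀ i i', i ≤ i' → i' ≤ J →
      ∑ j ∈ Finset.range (n+1), P i' j ≤ ∑ j ∈ Finset.range (n+1), P i j)
    (hβ : ∀ h, 0 < β h)
    (hmono : ∀ i i', i ≤ i' → i' ≤ J → s i ≤ s i')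
    (hstep : ∀ i, i < J → s (i+1) = s i ∨ s (i+1) = s i + 1)
    (hs0 : s 0 = 0) (hsJ : s J = K)
    (Q : ℕ → ℕ → ℝ)
    (hQ : ∀ k k', Q k k' =
      (∑ h ∈ (Finset.range (J+1)).filter (fun h => s h = k),
        ∑ h' ∈ (Finset.range (J+1)).filter (fun h' => s h' = k'), β h * P h h') /
      (∑ h ∈ (Finset.range (J+1)).filter (fun h => s h = k), β h)) :
    ∀ n, n ≤ K → ∀ k k', k ≤ k' → k' ≤ K →
      ∑ l ∈ Finset.range (n+1), Q k' l ≤ ∑ l ∈ Finset.range (n+1), Q k l :=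
  dfr_preserved_under_aggregation_general J K P β s hDFR hβ hmono hstep hs0 hsJ Q hQ
end

section
/- The geometric-tail transition matrix design of Regnier and Shechter is DFR: let 0 < μ < 1, 0 < γ < 1, and λ = (1−μ−γ)/(1−γ−μγ) with 0 < λ < 1. Define P on states {0,1,...,J} by p_{00} = 1, p_{0j} = 0 for j ≥ 1, and for 1 ≤ i ≤ J: p_{i,0} = Σ_{n=i}^∞ μγ^n, p_{ij} = μγ^{i−j} for 1 ≤ j < i, p_{ii} = μ, p_{ij} = μλ^{j−i} for i < j < J, and p_{iJ} = Σ_{n=J−i}^∞ μλ^n. Then for every n ∈ {0,...,J}, the partial sum Σ_{j=0}^n p_{ij} is nonincreasing in i. -/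
/-!
Each row `i ≥ 1` is the law of `i + X` clipped to `[0, J]`, where the displacement `X` is
two-sided geometric: `P(X = -d) = μ γ ^ d` for `d ≥ 1` and `P(X = d) = μ λ ^ d` for `d ≥ 0`.
The relation between `λ`, `μ` and `γ` is exactly what makes `X` have total mass one.
So for `n < J` the `n`-th partial sum of row `i` is the distribution function of `X` at `n - i`,
which decreases in `i`; for `n = J` all rows sum to one, and so do all partial sums of the
absorbing row `0`.
-/

open Finset

theorem tsum_mul_pow_add {r : ℝ} (hr₀ : 0 ≤ r) (hr₁ : r < 1) (c : ℝ) (k : ℕ) :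
    ∑' n : ℕ, c * r ^ (k + n) = c * r ^ k / (1 - r) := by
  simp_rw [pow_add, ← mul_assoc]
  rw [tsum_mul_left, tsum_geometric_of_lt_one hr₀ hr₁, div_eq_mul_inv]

theorem geometric_tails_mass_eq_one {μ γ lam : ℝ} (hμ : μ ≠ 0) (hγ : γ ≠ 1) (hlam : lam ≠ 0)
    (hrel : lam = (1 - μ - γ) / (1 - γ - μ * γ)) :
    μ * γ / (1 - γ) + μ / (1 - lam) = 1 := by
  have hD : 1 - γ - μ * γ ≠ 0 := by
    rintro hD
    simp [hrel, hD] at hlam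
  have hγ' : 1 - γ ≠ 0 := sub_ne_zero.mpr (Ne.symm hγ)
  have h_one_sub : 1 - lam = μ * (1 - γ) / (1 - γ - μ * γ) := by
    rw [hrel]; field_simp; ring
  rw [h_one_sub]
  field_simp
  ring

/-- `P(X ≤ k)` for the displacement `X`. -/
noncomputable def geomTailCDF (μ γ lam : ℝ) (k : ℤ) : ℝ :=
  if k < 0 then μ * γ ^ (-k).toNat / (1 - γ)
  else μ * γ / (1 - γ) + μ * (1 - lam ^ (k.toNat + 1)) / (1 - lam)

section CDF

variable {μ γ lam : ℝ}

theorem geomTailCDF_of_lt_zero {k : ℤ} (hk : k < 0) :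
    geomTailCDF μ γ lam k = μ * γ ^ (-k).toNat / (1 - γ) := if_pos hk

theorem geomTailCDF_of_nonneg {k : ℤ} (hk : 0 ≤ k) :
    geomTailCDF μ γ lam k = μ * γ / (1 - γ) + μ * (1 - lam ^ (k.toNat + 1)) / (1 - lam) :=
  if_neg hk.not_gt

theorem monotone_geomTailCDF (hμ : 0 ≤ μ) (hγ₀ : 0 ≤ γ) (hγ₁ : γ < 1) (hlam₀ : 0 ≤ lam)
    (hlam₁ : lam < 1) : Monotone (geomTailCDF μ γ lam) := by
  have hγ' : 0 < 1 - γ := by linarith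
  have hlam' : 0 < 1 - lam := by linarith
  refine monotone_int_of_le_succ fun k => ?_
  rcases lt_trichotomy (k + 1) 0 with hk | hk | hk
  · rw [geomTailCDF_of_lt_zero hk, geomTailCDF_of_lt_zero (by omega),
      show (-k).toNat = (-(k + 1)).toNat + 1 by omega]
    gcongr μ * ?_ / _
    exact pow_le_pow_of_le_one hγ₀ hγ₁.le (Nat.le_succ _)
  · rw [geomTailCDF_of_lt_zero (by omega), geomTailCDF_of_nonneg hk.ge,
      show (-k).toNat = 1 by omega, show (k + 1).toNat = 0 by omega, pow_one, zero_add, pow_one,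
      mul_div_cancel_right₀ μ hlam'.ne']
    linarith
  · rw [geomTailCDF_of_nonneg (by omega), geomTailCDF_of_nonneg hk.le,
      show (k + 1).toNat = k.toNat + 1 by omega]
    gcongr _ + μ * (1 - ?_) / _
    exact pow_le_pow_of_le_one hlam₀ hlam₁.le (Nat.le_succ _)

theorem geomTailCDF_le (hμ : 0 ≤ μ) (hγ₀ : 0 ≤ γ) (hγ₁ : γ < 1) (hlam₀ : 0 ≤ lam)
    (hlam₁ : lam < 1) (k : ℤ) :
    geomTailCDF μ γ lam k ≤ μ * γ / (1 - γ) + μ / (1 - lam) := by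
  have hlam' : 0 < 1 - lam := by linarith
  calc geomTailCDF μ γ lam k ≤ geomTailCDF μ γ lam (max k 0) :=
        monotone_geomTailCDF hμ hγ₀ hγ₁ hlam₀ hlam₁ (le_max_left k 0)
    _ ≤ μ * γ / (1 - γ) + μ / (1 - lam) := by
        rw [geomTailCDF_of_nonneg (le_max_right k 0)]
        gcongr _ + ?_
        exact div_le_div_of_nonneg_right
          (mul_le_of_le_one_right hμ (sub_le_self 1 (by positivity))) hlam'.le

end CDF

structure IsGeometricTailTPM (J : ℕ) (μ γ lam : ℝ) (P : ℕ → ℕ → ℝ) : Prop where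
  zero_zero : P 0 0 = 1
  zero_of_pos : ∀ j, 1 ≤ j → P 0 j = 0
  row_zero : ∀ i, 1 ≤ i → i ≤ J → P i 0 = ∑' n : ℕ, μ * γ ^ (i + n)
  row_lt : ∀ i j, 1 ≤ j → j < i → i ≤ J → P i j = μ * γ ^ (i - j)
  row_diag : ∀ i, 1 ≤ i → i < J → P i i = μ
  row_gt : ∀ i j, 1 ≤ i → i < j → j < J → P i j = μ * lam ^ (j - i)
  row_top : ∀ i, 1 ≤ i → i ≤ J → P i J = ∑' n : ℕ, μ * lam ^ ((J - i) + n)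

namespace IsGeometricTailTPM

variable {J : ℕ} {μ γ lam : ℝ} {P : ℕ → ℕ → ℝ}

theorem sum_row_zero (hP : IsGeometricTailTPM J μ γ lam P) (n : ℕ) :
    ∑ j ∈ range (n + 1), P 0 j = 1 := by
  rw [sum_range_succ', sum_eq_zero fun j _ => hP.zero_of_pos (j + 1) (Nat.le_add_left 1 j),
    hP.zero_zero, zero_add]

theorem sum_row_of_lt (hP : IsGeometricTailTPM J μ γ lam P) (hγ₀ : 0 ≤ γ) (hγ₁ : γ < 1)
    {i n : ℕ} (hiJ : i ≤ J) (hni : n < i) :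
    ∑ j ∈ range (n + 1), P i j = μ * γ ^ (i - n) / (1 - γ) := by
  have hγ' : 1 - γ ≠ 0 := by linarith
  induction n with
  | zero => rw [sum_range_one, hP.row_zero i hni hiJ, tsum_mul_pow_add hγ₀ hγ₁, Nat.sub_zero]
  | succ n ih =>
    rw [sum_range_succ, ih (by omega), hP.row_lt i (n + 1) (by omega) hni hiJ,
      show i - n = i - (n + 1) + 1 by omega, pow_succ]
    field_simp
    ring

theorem sum_row_of_le (hP : IsGeometricTailTPM J μ γ lam P) (hγ₀ : 0 ≤ γ) (hγ₁ : γ < 1)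
    (hlam₁ : lam < 1) {i n : ℕ} (hi : 1 ≤ i) (hin : i ≤ n) (hnJ : n < J) :
    ∑ j ∈ range (n + 1), P i j = μ * γ / (1 - γ) + μ * (1 - lam ^ (n - i + 1)) / (1 - lam) := by
  have hlam' : 1 - lam ≠ 0 := by linarith
  induction n, hin using Nat.le_induction with
  | base =>
    obtain ⟨m, rfl⟩ := Nat.exists_eq_add_of_le' hi
    rw [sum_range_succ, hP.sum_row_of_lt hγ₀ hγ₁ hnJ.le (Nat.lt_succ_self m),
      hP.row_diag _ hi hnJ, Nat.add_sub_cancel_left, Nat.sub_self, zero_add, pow_one, pow_one,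
      mul_div_cancel_right₀ μ hlam']
  | succ n hin ih =>
    rw [sum_range_succ, ih (by omega), hP.row_gt i (n + 1) hi (by omega) hnJ,
      show n + 1 - i = n - i + 1 by omega, pow_succ _ (n - i + 1)]
    field_simp
    ring

theorem sum_row_eq_geomTailCDF (hP : IsGeometricTailTPM J μ γ lam P) (hγ₀ : 0 ≤ γ)
    (hγ₁ : γ < 1) (hlam₁ : lam < 1) {i n : ℕ} (hi : 1 ≤ i) (hiJ : i ≤ J) (hnJ : n < J) :
    ∑ j ∈ range (n + 1), P i j = geomTailCDF μ γ lam (n - i) := by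
  rcases lt_or_ge n i with hni | hin
  · rw [hP.sum_row_of_lt hγ₀ hγ₁ hiJ hni, geomTailCDF_of_lt_zero (by omega),
      show (-((n : ℤ) - i)).toNat = i - n by omega]
  · rw [hP.sum_row_of_le hγ₀ hγ₁ hlam₁ hi hin hnJ, geomTailCDF_of_nonneg (by omega),
      show ((n : ℤ) - i).toNat = n - i by omega]

theorem sum_row_top (hP : IsGeometricTailTPM J μ γ lam P) (hγ₀ : 0 ≤ γ) (hγ₁ : γ < 1)
    (hlam₀ : 0 ≤ lam) (hlam₁ : lam < 1) {i : ℕ} (hi : 1 ≤ i) (hiJ : i ≤ J) :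
    ∑ j ∈ range (J + 1), P i j = μ * γ / (1 - γ) + μ / (1 - lam) := by
  have hlam' : 1 - lam ≠ 0 := by linarith
  obtain ⟨K, rfl⟩ := Nat.exists_eq_add_of_le' (hi.trans hiJ)
  rw [sum_range_succ, hP.row_top i hi hiJ, tsum_mul_pow_add hlam₀ hlam₁]
  rcases hiJ.lt_or_eq with hiJ | rfl
  · rw [hP.sum_row_of_le hγ₀ hγ₁ hlam₁ hi (by omega) (Nat.lt_succ_self K),
      show K - i + 1 = K + 1 - i by omega]
    field_simp
    ring
  · rw [hP.sum_row_of_lt hγ₀ hγ₁ le_rfl (Nat.lt_succ_self K), Nat.add_sub_cancel_left,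
      Nat.sub_self, pow_one, pow_zero, mul_one]

theorem sum_row_le_one (hP : IsGeometricTailTPM J μ γ lam P) (hμ : 0 ≤ μ) (hγ₀ : 0 ≤ γ)
    (hγ₁ : γ < 1) (hlam₀ : 0 ≤ lam) (hlam₁ : lam < 1)
    (hmass : μ * γ / (1 - γ) + μ / (1 - lam) = 1) {i n : ℕ} (hiJ : i ≤ J) (hnJ : n ≤ J) :
    ∑ j ∈ range (n + 1), P i j ≤ 1 := by
  rcases Nat.eq_zero_or_pos i with rfl | hi
  · exact (hP.sum_row_zero n).le
  rcases hnJ.lt_or_eq with hnJ | rfl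
  · rw [hP.sum_row_eq_geomTailCDF hγ₀ hγ₁ hlam₁ hi hiJ hnJ, ← hmass]
    exact geomTailCDF_le hμ hγ₀ hγ₁ hlam₀ hlam₁ _
  · rw [hP.sum_row_top hγ₀ hγ₁ hlam₀ hlam₁ hi hiJ, hmass]

end IsGeometricTailTPM

theorem geometric_tail_tpm_is_dfr_general
    (J : ℕ) (μ γ lam : ℝ)
    (hμ : 0 < μ ∧ μ < 1) (hγ : 0 < γ ∧ γ < 1) (hlam : 0 < lam ∧ lam < 1)
    (hrel : lam = (1 - μ - γ) / (1 - γ - μ * γ))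
    (P : ℕ → ℕ → ℝ)
    (hP00 : P 0 0 = 1) (hP0 : ∀ j, 1 ≤ j → P 0 j = 0)
    (hPi0 : ∀ i, 1 ≤ i → i ≤ J → P i 0 = ∑' n : ℕ, μ * γ ^ (i + n))
    (hPlow : ∀ i j, 1 ≤ j → j < i → i ≤ J → P i j = μ * γ ^ (i - j))
    (hPdiag : ∀ i, 1 ≤ i → i < J → P i i = μ)
    (hPhigh : ∀ i j, 1 ≤ i → i < j → j < J → P i j = μ * lam ^ (j - i))
    (hPiJ : ∀ i, 1 ≤ i → i ≤ J → P i J = ∑' n : ℕ, μ * lam ^ ((J - i) + n)) :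
    ∀ n, n ≤ J → ∀ i i', i ≤ i' → i' ≤ J →
      ∑ j ∈ Finset.range (n+1), P i' j ≤ ∑ j ∈ Finset.range (n+1), P i j := by
  obtain ⟨hμ₀, -⟩ := hμ
  obtain ⟨hγ₀, hγ₁⟩ := hγ
  obtain ⟨hlam₀, hlam₁⟩ := hlam
  have hP : IsGeometricTailTPM J μ γ lam P := ⟨hP00, hP0, hPi0, hPlow, hPdiag, hPhigh, hPiJ⟩
  have hmass := geometric_tails_mass_eq_one hμ₀.ne' hγ₁.ne hlam₀.ne' hrel
  intro n hnJ i i' hii' hi'J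
  rcases Nat.eq_zero_or_pos i with rfl | hi
  · rw [hP.sum_row_zero]
    exact hP.sum_row_le_one hμ₀.le hγ₀.le hγ₁ hlam₀.le hlam₁ hmass hi'J hnJ
  rcases hnJ.lt_or_eq with hnJ | rfl
  · rw [hP.sum_row_eq_geomTailCDF hγ₀.le hγ₁ hlam₁ (hi.trans_le hii') hi'J hnJ,
      hP.sum_row_eq_geomTailCDF hγ₀.le hγ₁ hlam₁ hi (hii'.trans hi'J) hnJ]
    exact monotone_geomTailCDF hμ₀.le hγ₀.le hγ₁ hlam₀.le hlam₁ (by omega)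
  · rw [hP.sum_row_top hγ₀.le hγ₁ hlam₀.le hlam₁ (hi.trans_le hii') hi'J,
      hP.sum_row_top hγ₀.le hγ₁ hlam₀.le hlam₁ hi (hii'.trans hi'J)]

/-- the geometric-tail transition matrix design is DFR. -/
theorem geometric_tail_tpm_is_dfr
    (J : ℕ) (hJ : 1 ≤ J) (μ γ lam : ℝ)
    (hμ : 0 < μ ∧ μ < 1) (hγ : 0 < γ ∧ γ < 1) (hlam : 0 < lam ∧ lam < 1)
    (hrel : lam = (1 - μ - γ) / (1 - γ - μ * γ))
    (P : ℕ → ℕ → ℝ)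
    (hP00 : P 0 0 = 1) (hP0 : ∀ j, 1 ≤ j → P 0 j = 0)
    (hPi0 : ∀ i, 1 ≤ i → i ≤ J → P i 0 = ∑' n : ℕ, μ * γ ^ (i + n))
    (hPlow : ∀ i j, 1 ≤ j → j < i → i ≤ J → P i j = μ * γ ^ (i - j))
    (hPdiag : ∀ i, 1 ≤ i → i < J → P i i = μ)
    (hPhigh : ∀ i j, 1 ≤ i → i < j → j < J → P i j = μ * lam ^ (j - i))
    (hPiJ : ∀ i, 1 ≤ i → i ≤ J → P i J = ∑' n : ℕ, μ * lam ^ ((J - i) + n)) :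
    ∀ n, n ≤ J → ∀ i i', i ≤ i' → i' ≤ J →
      ∑ j ∈ Finset.range (n+1), P i' j ≤ ∑ j ∈ Finset.range (n+1), P i j :=
  geometric_tail_tpm_is_dfr_general J μ γ lam hμ hγ hlam hrel P hP00 hP0 hPi0 hPlow hPdiag hPhigh
    hPiJ
end

section
/- If condition (c) (r(m,1) − r(n,1))/r(m,1) ≤ α(p_{n,0} − p_{m,0}) holds for the boundary states m = min(L_k), n = max(L_{k−1}) of an aggregation, and the aggregated rewards satisfy (r_Q(k,1) − r_Q(k−1,1))/r_Q(k,1) ≤ (r(m,1) − r(n,1))/r(m,1), and P is DFR with β-weighted aggregation Q, then (r_Q(k,1) − r_Q(k−1,1))/r_Q(k,1) ≤ α(q_{k−1,0} − q_{k,0}). -/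
/-! A weighted average of the probabilities `p_{h,0}` over a block lies between their values at
the ends of the block, since `p_{h,0}` is nonincreasing in `h` under DFR. Hence the drop
`q_{k-1,0} - q_{k,0}` of the aggregated probabilities dominates the drop `p_{n,0} - p_{m,0}`
across the boundary between the blocks `L_{k-1}` and `L_k`, and condition (c) transfers. -/

namespace Finset

variable {ι : Type*} {s : Finset ι} {w f : ι → ℝ} {c : ℝ}

theorem sum_mul_div_sum_le (hw : ∀ i ∈ s, 0 ≤ w i) (hws : 0 < ∑ i ∈ s, w i)
    (hf : ∀ i ∈ s, f i ≤ c) : (∑ i ∈ s, w i * f i) / ∑ i ∈ s, w i ≤ c := by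
  rw [div_le_iff₀ hws, mul_comm, sum_mul]
  exact sum_le_sum fun i hi => mul_le_mul_of_nonneg_left (hf i hi) (hw i hi)

theorem le_sum_mul_div_sum (hw : ∀ i ∈ s, 0 ≤ w i) (hws : 0 < ∑ i ∈ s, w i)
    (hf : ∀ i ∈ s, c ≤ f i) : c ≤ (∑ i ∈ s, w i * f i) / ∑ i ∈ s, w i := by
  rw [le_div_iff₀ hws, mul_comm, sum_mul]
  exact sum_le_sum fun i hi => mul_le_mul_of_nonneg_left (hf i hi) (hw i hi)

end Finset

theorem le_of_mem_filter_range {J : ℕ} {p : ℕ → Prop} [DecidablePred p] {h : ℕ}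
    (hh : h ∈ (Finset.range (J + 1)).filter p) : h ≤ J :=
  Nat.lt_succ_iff.mp (Finset.mem_range.mp (Finset.mem_filter.mp hh).1)

/-- propagation of the reward-slope condition (c) to the aggregated model. -/
theorem reward_slope_condition_propagates
    (J K : ℕ) (P : ℕ → ℕ → ℝ) (β : ℕ → ℝ) (s : ℕ → ℕ) (α : ℝ)
    (r1 : ℕ → ℝ) (rQ : ℕ → ℝ)
    (hα : 0 < α)
    (hDFR : ∀ n, n ≤ J → ∀ i i', i ≤ i' → i' ≤ J →
      ∑ j ∈ Finset.range (n+1), P i' j ≤ ∑ j ∈ Finset.range (n+1), P i j)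
    (hβ : ∀ h, 0 < β h)
    (hne : ∀ k (_ : k ≤ K), ((Finset.range (J+1)).filter (fun h => s h = k)).Nonempty)
    (q0 : ℕ → ℝ)
    (hq0 : ∀ k, q0 k =
      (∑ h ∈ (Finset.range (J+1)).filter (fun h => s h = k), β h * P h 0) /
      (∑ h ∈ (Finset.range (J+1)).filter (fun h => s h = k), β h)) :
    ∀ k (h2 : 2 ≤ k) (hk : k ≤ K),
      -- m = min L_k, n = max L_{k-1}
      (let m := ((Finset.range (J+1)).filter (fun h => s h = k)).min' (hne k hk)
       let n := ((Finset.range (J+1)).filter (fun h => s h = k - 1)).max' (hne (k-1) (by omega))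
       (r1 m - r1 n) / r1 m ≤ α * (P n 0 - P m 0) →
       (rQ k - rQ (k-1)) / rQ k ≤ (r1 m - r1 n) / r1 m →
       (rQ k - rQ (k-1)) / rQ k ≤ α * (q0 (k-1) - q0 k)) := by
  intro k _ hk m n hc hrQ
  have hP0 : ∀ i i', i ≤ i' → i' ≤ J → P i' 0 ≤ P i 0 := fun i i' hii' hi' => by
    simpa using hDFR 0 J.zero_le i i' hii' hi'
  have hβsum : ∀ l (hl : l ≤ K), 0 < ∑ h ∈ (Finset.range (J+1)).filter (fun h => s h = l), β h :=
    fun l hl => Finset.sum_pos (fun h _ => hβ h) (hne l hl)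
  have hn : P n 0 ≤ q0 (k-1) := by
    rw [hq0]
    refine Finset.le_sum_mul_div_sum (fun h _ => (hβ h).le) (hβsum _ (by omega)) fun h hh => ?_
    exact hP0 h n (Finset.le_max' _ _ hh) (le_of_mem_filter_range (Finset.max'_mem _ _))
  have hm : q0 k ≤ P m 0 := by
    rw [hq0]
    refine Finset.sum_mul_div_sum_le (fun h _ => (hβ h).le) (hβsum k hk) fun h hh => ?_
    exact hP0 m h (Finset.min'_le _ _ hh) (le_of_mem_filter_range hh)
  calc (rQ k - rQ (k-1)) / rQ k ≤ (r1 m - r1 n) / r1 m := hrQ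
    _ ≤ α * (P n 0 - P m 0) := hc
    _ ≤ α * (q0 (k-1) - q0 k) := by gcongr
end

section
/- In a two-action stopping MDP with actions {continue, stop}, discount α ∈ (0,1), stopping reward r(h,1) nondecreasing in h with the system then absorbed with no further reward, continuation reward r(h,0) = c constant, and continuation matrix P^0 that is DFR (hence stochastically monotone decreasing in the ordering worst-to-best), the optimal value function v* satisfying v*(h) = max{ r(h,1), c + α Σ_{h'} p^0_{hh'} v*(h') } is nondecreasing in h. -/
/-!
Value iteration started at `0` converges to `v`, because the Bellman operator is an
`α`-contraction for the sup distance on the states `0, …, J` and `v` is its fixed point there.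
Every iterate is monotone: under DFR the row `P i'` stochastically dominates `P i` for `i ≤ i'`,
so by Abel summation it gives a monotone function a larger expectation, and the maximum with the
monotone stopping reward keeps the iterate monotone. Monotonicity passes to the pointwise limit.
-/

open Finset Filter Topology

/-- First-order stochastic dominance, proved by Abel summation. -/
theorem sum_mul_le_sum_mul_of_partialSum_le {N : ℕ} {p q w : ℕ → ℝ}
    (hsum : ∑ j ∈ range (N + 1), p j = ∑ j ∈ range (N + 1), q j)
    (hpq : ∀ n < N, ∑ j ∈ range (n + 1), q j ≤ ∑ j ∈ range (n + 1), p j)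
    (hw : MonotoneOn w (Set.Iic N)) :
    ∑ j ∈ range (N + 1), p j * w j ≤ ∑ j ∈ range (N + 1), q j * w j := by
  have abel (g : ℕ → ℝ) : ∑ j ∈ range (N + 1), g j * w j =
      w N * ∑ j ∈ range (N + 1), g j
        - ∑ i ∈ range N, (w (i + 1) - w i) * ∑ j ∈ range (i + 1), g j := by
    simpa [smul_eq_mul, mul_comm] using sum_range_by_parts w g (N + 1)
  rw [abel, abel, hsum, sub_le_sub_iff_left]
  refine sum_le_sum fun i hi => mul_le_mul_of_nonneg_left (hpq i (mem_range.1 hi)) ?_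
  have hiN := mem_range.1 hi
  exact sub_nonneg.2 (hw (Set.mem_Iic.2 hiN.le) (Set.mem_Iic.2 hiN) (Nat.le_succ i))

namespace StoppingMDP

noncomputable def bellman (J : ℕ) (α c : ℝ) (P : ℕ → ℕ → ℝ) (r u : ℕ → ℝ) (h : ℕ) : ℝ :=
  max (r h) (c + α * ∑ j ∈ range (J + 1), P h j * u j)

variable {J : ℕ} {α c : ℝ} {P : ℕ → ℕ → ℝ} {r : ℕ → ℝ}

theorem bellman_monotoneOn (hα : 0 ≤ α) (hProw : ∀ i ≤ J, ∑ j ∈ range (J + 1), P i j = 1)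
    (hDFR : ∀ n ≤ J, ∀ i i', i ≤ i' → i' ≤ J →
      ∑ j ∈ range (n + 1), P i' j ≤ ∑ j ∈ range (n + 1), P i j)
    (hr : MonotoneOn r (Set.Iic J)) {u : ℕ → ℝ} (hu : MonotoneOn u (Set.Iic J)) :
    MonotoneOn (bellman J α c P r u) (Set.Iic J) := by
  intro i hi i' hi' hii'
  have hsum : ∑ j ∈ range (J + 1), P i j * u j ≤ ∑ j ∈ range (J + 1), P i' j * u j :=
    sum_mul_le_sum_mul_of_partialSum_le (by rw [hProw i hi, hProw i' hi'])
      (fun n hn => hDFR n hn.le i i' hii' hi') hu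
  exact max_le_max (hr hi hi' hii') (by gcongr)

theorem abs_bellman_sub_bellman_le (hα : 0 ≤ α) (hPnn : ∀ i j, 0 ≤ P i j)
    (hProw : ∀ i ≤ J, ∑ j ∈ range (J + 1), P i j = 1) {u w : ℕ → ℝ} {d : ℝ}
    (hd : ∀ j ≤ J, |u j - w j| ≤ d) {h : ℕ} (hh : h ≤ J) :
    |bellman J α c P r u h - bellman J α c P r w h| ≤ α * d := by
  have hexp : |∑ j ∈ range (J + 1), P h j * u j - ∑ j ∈ range (J + 1), P h j * w j| ≤ d :=
    calc |∑ j ∈ range (J + 1), P h j * u j - ∑ j ∈ range (J + 1), P h j * w j|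
        ≤ ∑ j ∈ range (J + 1), |P h j * (u j - w j)| := by
          simpa only [← sum_sub_distrib, mul_sub] using abs_sum_le_sum_abs _ _
      _ ≤ ∑ j ∈ range (J + 1), P h j * d := by
          refine sum_le_sum fun j hj => ?_
          rw [abs_mul, abs_of_nonneg (hPnn h j)]
          exact mul_le_mul_of_nonneg_left (hd j (Nat.lt_succ_iff.1 (mem_range.1 hj))) (hPnn h j)
      _ = d := by rw [← sum_mul, hProw h hh, one_mul]
  calc |bellman J α c P r u h - bellman J α c P r w h|
      ≤ |(c + α * ∑ j ∈ range (J + 1), P h j * u j)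
          - (c + α * ∑ j ∈ range (J + 1), P h j * w j)| := by
        simpa only [bellman, max_comm (r h)] using abs_max_sub_max_le_abs _ _ _
    _ = α * |∑ j ∈ range (J + 1), P h j * u j - ∑ j ∈ range (J + 1), P h j * w j| := by
        rw [add_sub_add_left_eq_sub, ← mul_sub, abs_mul, abs_of_nonneg hα]
    _ ≤ α * d := mul_le_mul_of_nonneg_left hexp hα

theorem bellman_iterate_monotoneOn (hα : 0 ≤ α)
    (hProw : ∀ i ≤ J, ∑ j ∈ range (J + 1), P i j = 1)
    (hDFR : ∀ n ≤ J, ∀ i i', i ≤ i' → i' ≤ J →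
      ∑ j ∈ range (n + 1), P i' j ≤ ∑ j ∈ range (n + 1), P i j)
    (hr : MonotoneOn r (Set.Iic J)) {u : ℕ → ℝ} (hu : MonotoneOn u (Set.Iic J)) (n : ℕ) :
    MonotoneOn ((bellman J α c P r)^[n] u) (Set.Iic J) := by
  induction n with
  | zero => exact hu
  | succ n ih =>
    rw [Function.iterate_succ_apply']
    exact bellman_monotoneOn hα hProw hDFR hr ih

theorem tendsto_bellman_iterate (hα : 0 ≤ α ∧ α < 1) (hPnn : ∀ i j, 0 ≤ P i j)
    (hProw : ∀ i ≤ J, ∑ j ∈ range (J + 1), P i j = 1) {v : ℕ → ℝ}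
    (hv : ∀ h ≤ J, bellman J α c P r v h = v h) (u : ℕ → ℝ) {h : ℕ} (hh : h ≤ J) :
    Tendsto (fun n => (bellman J α c P r)^[n] u h) atTop (𝓝 (v h)) := by
  set d := ∑ j ∈ range (J + 1), |v j - u j|
  have hdist : ∀ n, ∀ h ≤ J, |v h - (bellman J α c P r)^[n] u h| ≤ α ^ n * d := by
    intro n
    induction n with
    | zero =>
      intro h hh
      simpa using single_le_sum (f := fun j => |v j - u j|) (fun _ _ => abs_nonneg _)
        (mem_range.2 (Nat.lt_succ_of_le hh))
    | succ n ih =>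
      intro h hh
      rw [Function.iterate_succ_apply', ← hv h hh, pow_succ', mul_assoc]
      exact abs_bellman_sub_bellman_le hα.1 hPnn hProw ih hh
  rw [tendsto_iff_dist_tendsto_zero]
  refine squeeze_zero (g := fun n => α ^ n * d) (fun _ => dist_nonneg) (fun n => ?_) ?_
  · rw [dist_comm, Real.dist_eq]
    exact hdist n h hh
  · simpa using (tendsto_pow_atTop_nhds_zero_of_lt_one hα.1 hα.2).mul_const d

end StoppingMDP

/-- in a two-action stopping MDP with nondecreasing stopping reward,
constant continuation reward, and DFR continuation matrix, the optimal value
function is nondecreasing. -/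
theorem stopping_mdp_value_monotone
    (J : ℕ) (α c : ℝ) (P : ℕ → ℕ → ℝ) (r1 v : ℕ → ℝ)
    (hα : 0 < α ∧ α < 1)
    (hPnn : ∀ i j, 0 ≤ P i j)
    (hProw : ∀ i, i ≤ J → ∑ j ∈ Finset.range (J+1), P i j = 1)
    (hDFR : ∀ n, n ≤ J → ∀ i i', i ≤ i' → i' ≤ J →
      ∑ j ∈ Finset.range (n+1), P i' j ≤ ∑ j ∈ Finset.range (n+1), P i j)
    (hr1mono : ∀ h h', h ≤ h' → h' ≤ J → r1 h ≤ r1 h')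
    (hv : ∀ h, h ≤ J →
      v h = max (r1 h) (c + α * ∑ j ∈ Finset.range (J+1), P h j * v j)) :
    ∀ h h', h ≤ h' → h' ≤ J → v h ≤ v h' := by
  intro h h' hh' hh'J
  have hhJ : h ≤ J := hh'.trans hh'J
  have hα' : 0 ≤ α ∧ α < 1 := ⟨hα.1.le, hα.2⟩
  have hfix : ∀ h ≤ J, StoppingMDP.bellman J α c P r1 v h = v h := fun h hh => (hv h hh).symm
  have hr : MonotoneOn r1 (Set.Iic J) := fun i _ i' hi' hii' => hr1mono i i' hii' hi'
  have hiterMono := StoppingMDP.bellman_iterate_monotoneOn (c := c) hα'.1 hProw hDFR hr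
    (monotoneOn_const (c := (0 : ℝ)))
  have hlim := StoppingMDP.tendsto_bellman_iterate hα' hPnn hProw hfix 0 hhJ
  have hlim' := StoppingMDP.tendsto_bellman_iterate hα' hPnn hProw hfix 0 hh'J
  exact le_of_tendsto_of_tendsto' hlim hlim' fun n =>
    hiterMono n (Set.mem_Iic.2 hhJ) (Set.mem_Iic.2 hh'J) hh'
end
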